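/- arXiv:1508.00753 — 3 statements merged into one kernel-verified Lean document; each statement's English description precedes it below -/
import Mathlib

section
/- With F₁ holomorphic, nowhere zero, and F_{s+1} = ∂F_s − (⟨∂F_s, conj F_s⟩/‖F_s‖²) F_s (assuming each F_s is nowhere zero for s ≤ n), the vectors F₁, …, F_{n+1} are pairwise orthogonal with respect to the Hermitian inner product: ⟨F_j, conj F_k⟩ = 0 for all 1 ≤ j < k ≤ n+1. -/
/-- The symmetric (complex bilinear) product `⟨v,w⟩ = Σ v_j w_j` (no conjugation). -/
noncomputable def symProd {N : ℕ} (v w : Fin N → ℂ) : ℂ := ∑ j, v j * w j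

/-- Componentwise complex conjugation. -/
def conjV {N : ℕ} (v : Fin N → ℂ) : Fin N → ℂ := fun j => (starRingEnd ℂ) (v j)

/-- The Wirtinger derivative `∂ = ∂/∂z`. -/
noncomputable def wd {E : Type*} [NormedAddCommGroup E] [NormedSpace ℂ E]
    (f : ℂ → E) (z : ℂ) : E :=
  (1 / 2 : ℂ) • (fderiv ℝ f z 1 - Complex.I • fderiv ℝ f z Complex.I)

/-- The anti-Wirtinger derivative `∂̄ = ∂/∂z̄`. -/
noncomputable def wdb {E : Type*} [NormedAddCommGroup E] [NormedSpace ℂ E]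
    (f : ℂ → E) (z : ℂ) : E :=
  (1 / 2 : ℂ) • (fderiv ℝ f z 1 + Complex.I • fderiv ℝ f z Complex.I)

lemma wd_mul (f g : ℂ → ℂ) (z : ℂ) (hf : DifferentiableAt ℝ f z)
    (hg : DifferentiableAt ℝ g z) :
    wd (fun w => f w * g w) z = wd f z * g z + f z * wd g z := by
  unfold wd
  rw [fderiv_fun_mul hf hg]
  simp only [ContinuousLinearMap.add_apply, ContinuousLinearMap.smul_apply, smul_eq_mul]
  ring

lemma wd_sum {ι : Type*} (s : Finset ι) (f : ι → ℂ → ℂ) (z : ℂ)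
    (hf : ∀ i ∈ s, DifferentiableAt ℝ (f i) z) :
    wd (fun w => ∑ i ∈ s, f i w) z = ∑ i ∈ s, wd (f i) z := by
  unfold wd
  rw [fderiv_fun_sum hf]
  simp only [ContinuousLinearMap.sum_apply, smul_eq_mul, Finset.mul_sum]
  rw [← Finset.sum_sub_distrib, Finset.mul_sum]

lemma wd_eventually_zero {E : Type*} [NormedAddCommGroup E] [NormedSpace ℂ E]
    (f : ℂ → E) (z : ℂ) (h : f =ᶠ[nhds z] fun _ => 0) : wd f z = 0 := by
  unfold wd
  rw [h.fderiv_eq]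
  simp [fderiv_const]

noncomputable def conjL (N : ℕ) : (Fin N → ℂ) →L[ℝ] (Fin N → ℂ) :=
  ContinuousLinearMap.pi fun i =>
    (Complex.conjCLE.toContinuousLinearMap).comp (ContinuousLinearMap.proj i)

lemma conjL_apply {N : ℕ} (v : Fin N → ℂ) : conjL N v = conjV v := by
  funext i
  simp [conjL, conjV, Complex.conjCLE]

lemma wd_eval {N : ℕ} (f : ℂ → Fin N → ℂ) (z : ℂ) (hf : DifferentiableAt ℝ f z) (i : Fin N) :
    wd (fun w => f w i) z = wd f z i := by
  have h1 := ((ContinuousLinearMap.proj (R := ℝ) (φ := fun _ : Fin N => ℂ) i).hasFDerivAt.comp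
    z hf.hasFDerivAt).fderiv
  simp only [Function.comp_def, ContinuousLinearMap.proj_apply] at h1
  unfold wd
  rw [h1]
  simp

lemma wd_conjV {N : ℕ} (f : ℂ → Fin N → ℂ) (z : ℂ) (hf : DifferentiableAt ℝ f z) :
    wd (fun w => conjV (f w)) z = conjV (wdb f z) := by
  have h1 : fderiv ℝ (fun w => conjV (f w)) z = (conjL N).comp (fderiv ℝ f z) := by
    have h := ((conjL N).hasFDerivAt.comp z hf.hasFDerivAt).fderiv
    have : (fun w => conjV (f w)) = fun w => conjL N (f w) := by
      funext w; rw [conjL_apply]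
    rw [this]
    exact h
  unfold wd wdb
  rw [h1]
  funext i
  simp only [Pi.smul_apply, Pi.sub_apply, Pi.add_apply, ContinuousLinearMap.comp_apply,
    conjL_apply, conjV, smul_eq_mul, map_mul, map_add, Complex.conj_I, map_div₀, map_one,
    map_ofNat]
  ring

lemma diff_conjV_comp {N : ℕ} (f : ℂ → Fin N → ℂ) (z : ℂ) (hf : DifferentiableAt ℝ f z) :
    DifferentiableAt ℝ (fun w => conjV (f w)) z := by
  have : (fun w => conjV (f w)) = fun w => conjL N (f w) := by
    funext w; rw [conjL_apply]
  rw [this]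
  exact ((conjL N).differentiableAt).comp z hf

lemma symProd_conj_self_ne_zero {N : ℕ} (v : Fin N → ℂ) (hv : v ≠ 0) :
    symProd v (conjV v) ≠ 0 := by
  have h : symProd v (conjV v) = ((∑ j, Complex.normSq (v j) : ℝ) : ℂ) := by
    simp [symProd, conjV, Complex.mul_conj]
  rw [h]
  rw [Ne, Complex.ofReal_eq_zero]
  obtain ⟨j, hj⟩ := Function.ne_iff.mp hv
  have hpos : 0 < ∑ j, Complex.normSq (v j) := by
    apply Finset.sum_pos' (fun i _ => Complex.normSq_nonneg _)
    exact ⟨j, Finset.mem_univ j, by simpa [Complex.normSq_pos] using hj⟩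
  exact ne_of_gt hpos

lemma symProd_sub_smul_left {N : ℕ} (a b w : Fin N → ℂ) (c : ℂ) :
    symProd (a - c • b) w = symProd a w - c * symProd b w := by
  simp [symProd, sub_mul, mul_assoc, Finset.sum_sub_distrib, Finset.mul_sum]

lemma symProd_add_right {N : ℕ} (a u v : Fin N → ℂ) :
    symProd a (u + v) = symProd a u + symProd a v := by
  simp [symProd, mul_add, Finset.sum_add_distrib]

lemma symProd_smul_right {N : ℕ} (a v : Fin N → ℂ) (c : ℂ) :
    symProd a (c • v) = c * symProd a v := by
  simp only [symProd, Pi.smul_apply, smul_eq_mul, Finset.mul_sum]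
  exact Finset.sum_congr rfl fun i _ => by ring

lemma symProd_zero_right {N : ℕ} (a : Fin N → ℂ) : symProd a 0 = 0 := by
  simp [symProd]


/-- With `F₁` holomorphic, each `F_s` (`s ≤ n`) nowhere zero, the recursion
`F_{s+1} = ∂F_s − (⟨∂F_s, conj F_s⟩/‖F_s‖²) F_s`, and
`∂(conj F_s) ∈ span_ℂ{conj F₁, …, conj F_{s−1}}` for `2 ≤ s ≤ n`, the vectors
`F₁, …, F_{n+1}` are pairwise Hermitian-orthogonal: `⟨F_j, conj F_k⟩ = 0` for
`1 ≤ j < k ≤ n + 1`. -/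
theorem pairwise_herm_orthogonal (N n : ℕ) (U : Set ℂ) (hU : IsOpen U)
    (F : ℕ → ℂ → Fin N → ℂ)
    (hsm : ∀ s, 1 ≤ s → s ≤ n + 1 → ContDiffOn ℝ (⊤ : ℕ∞) (F s) U)
    (hhol : ∀ z ∈ U, wdb (F 1) z = 0)
    (hnz : ∀ s, 1 ≤ s → s ≤ n → ∀ z ∈ U, F s z ≠ 0)
    (hrec : ∀ s, 1 ≤ s → s ≤ n → ∀ z ∈ U, F (s + 1) z =
      wd (F s) z -
        (symProd (wd (F s) z) (conjV (F s z)) / symProd (F s z) (conjV (F s z))) • F s z)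
    (hspan : ∀ s, 2 ≤ s → s ≤ n → ∀ z ∈ U,
      wd (fun w => conjV (F s w)) z ∈
        Submodule.span ℂ {v | ∃ t, 1 ≤ t ∧ t ≤ s - 1 ∧ v = conjV (F t z)}) :
    ∀ z ∈ U, ∀ j k, 1 ≤ j → j < k → k ≤ n + 1 →
      symProd (F j z) (conjV (F k z)) = 0 := by
  have hdiff : ∀ s, 1 ≤ s → s ≤ n + 1 → ∀ z ∈ U, DifferentiableAt ℝ (F s) z := by
    intro s h1 h2 z hz
    exact ((hsm s h1 h2).contDiffAt (hU.mem_nhds hz)).differentiableAt (by simp)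
  have main : ∀ k, k ≤ n + 1 → ∀ t, 1 ≤ t → t < k → ∀ z ∈ U,
      symProd (F k z) (conjV (F t z)) = 0 := by
    intro k
    induction k using Nat.strong_induction_on with
    | _ k IH =>
      intro hk t ht1 htk z hz
      obtain ⟨s, rfl⟩ : ∃ s, k = s + 1 := ⟨k - 1, by omega⟩
      have hs1 : 1 ≤ s := by omega
      have hsn : s ≤ n := by omega
      have hts : t ≤ s := by omega
      have hFsd : DifferentiableAt ℝ (F s) z := hdiff s hs1 (by omega) z hz
      -- derivative orthogonality: ⟨∂F_s, conj F_r⟩ = 0 for 1 ≤ r < s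
      have hA : ∀ r, 1 ≤ r → r < s → symProd (wd (F s) z) (conjV (F r z)) = 0 := by
        intro r hr1 hrs
        have hFrd : DifferentiableAt ℝ (F r) z := hdiff r hr1 (by omega) z hz
        have hcd : DifferentiableAt ℝ (fun w => conjV (F r w)) z := diff_conjV_comp _ _ hFrd
        have hwdg : wd (fun w => symProd (F s w) (conjV (F r w))) z = 0 := by
          apply wd_eventually_zero
          filter_upwards [hU.mem_nhds hz] with w hw
          exact IH s (by omega) (by omega) r hr1 hrs w hw
        have hexp : wd (fun w => symProd (F s w) (conjV (F r w))) z =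
            symProd (wd (F s) z) (conjV (F r z)) +
            symProd (F s z) (wd (fun w => conjV (F r w)) z) := by
          have e1 : (fun w => symProd (F s w) (conjV (F r w))) =
              fun w => ∑ i, F s w i * conjV (F r w) i := by
            funext w; rfl
          rw [e1, wd_sum _ _ _ (fun i _ => by
            exact ((ContinuousLinearMap.proj i (R := ℝ)
              (φ := fun _ : Fin N => ℂ)).differentiableAt.comp z hFsd).mul
              ((ContinuousLinearMap.proj i (R := ℝ)
              (φ := fun _ : Fin N => ℂ)).differentiableAt.comp z hcd))]
          have e2 : ∀ i : Fin N,
              wd (fun w => F s w i * conjV (F r w) i) z =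
              wd (F s) z i * conjV (F r z) i + F s z i * wd (fun w => conjV (F r w)) z i := by
            intro i
            rw [wd_mul (fun w => F s w i) (fun w => conjV (F r w) i) z
              ((ContinuousLinearMap.proj i (R := ℝ)
                (φ := fun _ : Fin N => ℂ)).differentiableAt.comp z hFsd)
              ((ContinuousLinearMap.proj i (R := ℝ)
                (φ := fun _ : Fin N => ℂ)).differentiableAt.comp z hcd),
              wd_eval (F s) z hFsd i, wd_eval (fun w => conjV (F r w)) z hcd i]
          rw [Finset.sum_congr rfl (fun i _ => e2 i), Finset.sum_add_distrib]
          rfl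
        have hsecond : symProd (F s z) (wd (fun w => conjV (F r w)) z) = 0 := by
          rcases eq_or_lt_of_le hr1 with h1 | h2
          · -- r = 1
            have hw : wd (fun w => conjV (F r w)) z = conjV (wdb (F r) z) :=
              wd_conjV (F r) z hFrd
            rw [hw, ← h1, hhol z hz]
            simp [symProd, conjV]
          · -- 2 ≤ r
            have hmem := hspan r h2 (by omega) z hz
            refine Submodule.span_induction (p := fun v _ => symProd (F s z) v = 0)
              ?_ ?_ ?_ ?_ hmem
            · rintro v ⟨t', ht'1, ht'2, rfl⟩
              exact IH s (by omega) (by omega) t' ht'1 (by omega) z hz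
            · exact symProd_zero_right _
            · intro x y hx hy px py; rw [symProd_add_right, px, py, add_zero]
            · intro c x hx px; rw [symProd_smul_right, px, mul_zero]
        have := hexp.symm.trans hwdg
        rw [hsecond, add_zero] at this
        exact this
      rw [hrec s hs1 hsn z hz, symProd_sub_smul_left]
      rcases eq_or_lt_of_le hts with rfl | hlt
      · rw [div_mul_cancel₀ _ (symProd_conj_self_ne_zero _ (hnz t hs1 hsn z hz)), sub_self]
      · rw [hA t ht1 hlt, IH s (by omega) (by omega) t ht1 hlt z hz, mul_zero, sub_zero]
  intro z hz j k hj hjk hk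
  have h := main k hk j hj hjk z hz
  have hconj : symProd (F j z) (conjV (F k z)) =
      (starRingEnd ℂ) (symProd (F k z) (conjV (F j z))) := by
    simp [symProd, conjV, map_sum, map_mul, mul_comm]
  rw [hconj, h, map_zero]
end

section
/- Let F₁ : U → ℂ^N be holomorphic and define F_{s+1} = ∂F_s − (⟨∂F_s, conj F_s⟩/‖F_s‖²) F_s. Assuming the F_s (1 ≤ s ≤ n+1) are pairwise Hermitian-orthogonal and ∂(conj F_s) ∈ span{conj F_{s−1}} for each s, the (n+1)-fold wedge F₁ ∧ ⋯ ∧ F_{n+1} is an antiholomorphic-derivative-free map: ∂̄(F₁ ∧ ⋯ ∧ F_{n+1}) = 0, hence it is holomorphic into Λ^{n+1}ℂ^N. -/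
set_option linter.unusedVariables false in
lemma wd_apply {m : ℕ} (g : ℂ → Fin m → ℂ) (z : ℂ) (hd : DifferentiableAt ℝ g z)
    (j : Fin m) : wd g z j = wd (fun w => g w j) z := by
  have h : fderiv ℝ (fun w => g w j) z =
      (ContinuousLinearMap.proj j : (Fin m → ℂ) →L[ℝ] ℂ).comp (fderiv ℝ g z) := by
    have := ((ContinuousLinearMap.proj j : (Fin m → ℂ) →L[ℝ] ℂ).hasFDerivAt.comp z
      hd.hasFDerivAt).fderiv
    simpa [Function.comp_def] using this
  simp [wd, h, Pi.smul_apply, Pi.sub_apply, smul_eq_mul]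

lemma wdb_apply {m : ℕ} (g : ℂ → Fin m → ℂ) (z : ℂ) (hd : DifferentiableAt ℝ g z)
    (j : Fin m) : wdb g z j = wdb (fun w => g w j) z := by
  have h : fderiv ℝ (fun w => g w j) z =
      (ContinuousLinearMap.proj j : (Fin m → ℂ) →L[ℝ] ℂ).comp (fderiv ℝ g z) := by
    have := ((ContinuousLinearMap.proj j : (Fin m → ℂ) →L[ℝ] ℂ).hasFDerivAt.comp z
      hd.hasFDerivAt).fderiv
    simpa [Function.comp_def] using this
  simp [wdb, h, Pi.smul_apply, Pi.add_apply, smul_eq_mul]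

lemma wdb_eq_conj_wd (f : ℂ → ℂ) (z : ℂ) :
    wdb f z = (starRingEnd ℂ) (wd (fun w => (starRingEnd ℂ) (f w)) z) := by
  have h : fderiv ℝ (fun w => (starRingEnd ℂ) (f w)) z =
      (Complex.conjCLE : ℂ ≃L[ℝ] ℂ).toContinuousLinearMap.comp (fderiv ℝ f z) := by
    have := (Complex.conjCLE : ℂ ≃L[ℝ] ℂ).comp_fderiv (f := f) (x := z)
    simpa [Function.comp_def, Complex.conjCAE_apply] using this
  simp only [wd, wdb, h, ContinuousLinearMap.comp_apply,
    ContinuousLinearEquiv.coe_coe, Complex.conjCLE_apply, smul_eq_mul]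
  simp only [map_mul, map_sub, map_mul, Complex.conj_conj]
  ring_nf
  simp [Complex.conj_I, map_ofNat]
  ring

open Matrix in
lemma wdb_det {m : ℕ} (g : ℂ → Fin m → Fin m → ℂ) (z : ℂ)
    (hd : ∀ i j, DifferentiableAt ℝ (fun w => g w i j) z) :
    wdb (fun w => Matrix.det (Matrix.of fun i j => g w i j)) z =
      ∑ i, Matrix.det ((Matrix.of (g z)).updateRow i
        (fun j => wdb (fun w => g w i j) z)) := by
  classical
  have hdet : ∀ w, Matrix.det (Matrix.of fun i j => g w i j)
      = ∑ σ : Equiv.Perm (Fin m), ((Equiv.Perm.sign σ : ℤ) : ℂ) * ∏ i, g w i (σ i) := by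
    intro w
    rw [← Matrix.det_transpose, Matrix.det_apply']
    refine Finset.sum_congr rfl fun σ _ => ?_
    simp [Matrix.transpose_apply]
  have hfun : (fun w => Matrix.det (Matrix.of fun i j => g w i j))
      = fun w => ∑ σ : Equiv.Perm (Fin m), ((Equiv.Perm.sign σ : ℤ) : ℂ) *
          ∏ i, g w i (σ i) := funext hdet
  have hD : HasFDerivAt (fun w => Matrix.det (Matrix.of fun i j => g w i j))
      (∑ σ : Equiv.Perm (Fin m), ((Equiv.Perm.sign σ : ℤ) : ℂ) •
        ∑ i, (∏ j ∈ Finset.univ.erase i, g z j (σ j)) •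
          fderiv ℝ (fun w => g w i (σ i)) z) z := by
    rw [hfun]
    exact HasFDerivAt.fun_sum fun σ _ =>
      (HasFDerivAt.finset_prod fun i _ => (hd i (σ i)).hasFDerivAt).const_mul _
  have hrhs : ∀ i : Fin m,
      Matrix.det ((Matrix.of (g z)).updateRow i (fun j => wdb (fun w => g w i j) z))
      = ∑ σ : Equiv.Perm (Fin m), ((Equiv.Perm.sign σ : ℤ) : ℂ) *
          ((∏ j ∈ Finset.univ.erase i, g z j (σ j)) * wdb (fun w => g w i (σ i)) z) := by
    intro i
    rw [← Matrix.det_transpose, Matrix.det_apply']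
    refine Finset.sum_congr rfl fun σ _ => ?_
    have hprod : ∏ k, ((Matrix.of (g z)).updateRow i
          (fun j => wdb (fun w => g w i j) z))ᵀ (σ k) k
        = wdb (fun w => g w i (σ i)) z * ∏ k ∈ Finset.univ.erase i, g z k (σ k) := by
      rw [← Finset.mul_prod_erase Finset.univ _ (Finset.mem_univ i)]
      congr 1
      · simp [Matrix.transpose_apply, Matrix.updateRow_self]
      · refine Finset.prod_congr rfl fun k hk => ?_
        simp [Matrix.transpose_apply,
          Matrix.updateRow_ne (Finset.ne_of_mem_erase hk)]
    rw [hprod]; ring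
  rw [wdb, hD.fderiv]
  simp only [hrhs]
  rw [Finset.sum_comm]
  simp only [ContinuousLinearMap.sum_apply, ContinuousLinearMap.smul_apply, smul_eq_mul,
    Finset.mul_sum, Finset.smul_sum, ← Finset.sum_add_distrib]
  refine Finset.sum_congr rfl fun σ _ => ?_
  refine Finset.sum_congr rfl fun i _ => ?_
  rw [wdb]
  simp only [smul_eq_mul]
  ring

/-- With `F₁` holomorphic, the recursion `F_{s+1} = ∂F_s − (⟨∂F_s, conj F_s⟩/‖F_s‖²) F_s`,
the `F_s` (`1 ≤ s ≤ n+1`) pairwise Hermitian-orthogonal and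
`∂(conj F_s) ∈ span{conj F_{s−1}}`, the wedge `F₁ ∧ ⋯ ∧ F_{n+1}` is holomorphic:
`∂̄(F₁ ∧ ⋯ ∧ F_{n+1}) = 0`. The wedge is expressed through its Plücker coordinates,
i.e. the `(n+1) × (n+1)` minors `det (i, j) ↦ F_{i+1}(z)(idx j)`, and holomorphy of the
wedge means that each such coordinate is killed by `∂̄`. -/
theorem wedge_holomorphic (N n : ℕ) (U : Set ℂ) (hU : IsOpen U)
    (F : ℕ → ℂ → Fin N → ℂ)
    (hsm : ∀ s, 1 ≤ s → s ≤ n + 1 → ContDiffOn ℝ (⊤ : ℕ∞) (F s) U)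
    (hhol : ∀ z ∈ U, wdb (F 1) z = 0)
    (hnz : ∀ s, 1 ≤ s → s ≤ n → ∀ z ∈ U, F s z ≠ 0)
    (hrec : ∀ s, 1 ≤ s → s ≤ n → ∀ z ∈ U, F (s + 1) z =
      wd (F s) z -
        (symProd (wd (F s) z) (conjV (F s z)) / symProd (F s z) (conjV (F s z))) • F s z)
    (hherm : ∀ z ∈ U, ∀ j k, 1 ≤ j → j < k → k ≤ n + 1 →
      symProd (F j z) (conjV (F k z)) = 0)
    (hspan : ∀ s, 2 ≤ s → s ≤ n + 1 → ∀ z ∈ U,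
      ∃ c : ℂ, wd (fun w => conjV (F s w)) z = c • conjV (F (s - 1) z)) :
    ∀ idx : Fin (n + 1) → Fin N, ∀ z ∈ U,
      wdb (fun w => Matrix.det (Matrix.of fun i j : Fin (n + 1) => F (i.1 + 1) w (idx j)))
        z = 0 := by
  intro idx z hz
  have hdF : ∀ s, 1 ≤ s → s ≤ n + 1 → DifferentiableAt ℝ (F s) z := fun s h1 h2 =>
    ((hsm s h1 h2).differentiableOn (by simp)).differentiableAt (hU.mem_nhds hz)
  have hdE : ∀ s, 1 ≤ s → s ≤ n + 1 → ∀ j : Fin N,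
      DifferentiableAt ℝ (fun w => F s w j) z :=
    fun s h1 h2 j => (differentiableAt_pi.mp (hdF s h1 h2)) j
  have hd : ∀ i j : Fin (n + 1),
      DifferentiableAt ℝ (fun w => F (i.1 + 1) w (idx j)) z := fun i j =>
    hdE (i.1 + 1) (by omega) (by omega) (idx j)
  refine Eq.trans (wdb_det (fun w i j => F (i.1 + 1) w (idx j)) z hd) ?_
  refine Finset.sum_eq_zero fun i _ => ?_
  obtain ⟨iv, hi⟩ := i
  match iv, hi with
  | 0, hi =>
    refine Matrix.det_eq_zero_of_row_eq_zero ⟨0, hi⟩ fun j => ?_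
    rw [Matrix.updateRow_self]
    have h0 := wdb_apply (F 1) z (hdF 1 le_rfl (by omega)) (idx j)
    rw [← h0, hhol z hz]
    rfl
  | k + 1, hi =>
    have hk : k + 1 ≤ n := by omega
    obtain ⟨c, hc⟩ := hspan (k + 2) (by omega) (by omega) z hz
    have hdconj : DifferentiableAt ℝ (fun w => conjV (F (k + 2) w)) z :=
      differentiableAt_pi.mpr fun j =>
        (Complex.conjCLE.differentiable.differentiableAt).comp z
          (hdE (k + 2) (by omega) (by omega) j)
    have hrowval : ∀ j : Fin N,
        wdb (fun w => F (k + 2) w j) z = (starRingEnd ℂ) c * F (k + 1) z j := by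
      intro j
      have h1 := wd_apply (fun w => conjV (F (k + 2) w)) z hdconj j
      rw [hc] at h1
      have h2 : wd (fun w => (starRingEnd ℂ) (F (k + 2) w j)) z =
          c * (starRingEnd ℂ) (F (k + 1) z j) := by
        have h1' := h1.symm
        simpa [conjV, Pi.smul_apply, smul_eq_mul,
          show k + 2 - 1 = k + 1 from rfl] using h1'
      rw [wdb_eq_conj_wd, h2, map_mul, Complex.conj_conj]
    set M : Matrix (Fin (n + 1)) (Fin (n + 1)) ℂ :=
      Matrix.of fun i' j : Fin (n + 1) => F (i'.1 + 1) z (idx j) with hM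
    have hrow : (fun j => wdb (fun w => F (k + 1 + 1) w (idx j)) z)
        = (starRingEnd ℂ) c • M ⟨k, by omega⟩ := by
      funext j
      simp [hrowval (idx j), hM, Pi.smul_apply, smul_eq_mul]
    show (M.updateRow ⟨k + 1, hi⟩ (fun j => wdb (fun w => F (k + 1 + 1) w (idx j)) z)).det = 0
    rw [hrow, Matrix.det_updateRow_smul,
      Matrix.det_updateRow_eq_zero (show (⟨k, by omega⟩ : Fin (n + 1)) ≠ ⟨k + 1, hi⟩ by
        simp [Fin.ext_iff])]
    ring
end

section
/- Let F_n : U → ℂ^N be nowhere zero with ∂F_n = ∂(log‖F_n‖²)·F_n (i.e. F_{n+1} = 0 in the recursion). Then ξ = conj(F_n)/‖F_n‖² is holomorphic: ∂̄ξ = 0. -/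
section helpers
variable {E F' : Type*} [NormedAddCommGroup E] [NormedSpace ℂ E]
  [NormedAddCommGroup F'] [NormedSpace ℂ F']

lemma wd_clm (L : E →L[ℂ] F') {f : ℂ → E} {z : ℂ} (hf : DifferentiableAt ℝ f z) :
    wd (fun w => L (f w)) z = L (wd f z) := by
  have h : HasFDerivAt (fun w => L (f w)) ((L.restrictScalars ℝ).comp (fderiv ℝ f z)) z :=
    ((L.restrictScalars ℝ).hasFDerivAt (x := f z)).comp z hf.hasFDerivAt
  rw [wd, wd, h.fderiv]
  simp [map_sub, map_smul]

lemma wdb_clm (L : E →L[ℂ] F') {f : ℂ → E} {z : ℂ} (hf : DifferentiableAt ℝ f z) :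
    wdb (fun w => L (f w)) z = L (wdb f z) := by
  have h : HasFDerivAt (fun w => L (f w)) ((L.restrictScalars ℝ).comp (fderiv ℝ f z)) z :=
    ((L.restrictScalars ℝ).hasFDerivAt (x := f z)).comp z hf.hasFDerivAt
  rw [wdb, wdb, h.fderiv]
  simp [map_add, map_smul]

lemma wdb_conj {f : ℂ → ℂ} {z : ℂ} (hf : DifferentiableAt ℝ f z) :
    wdb (fun w => (starRingEnd ℂ) (f w)) z = (starRingEnd ℂ) (wd f z) := by
  have h : HasFDerivAt (fun w => (starRingEnd ℂ) (f w))
      ((Complex.conjCLE.toContinuousLinearMap).comp (fderiv ℝ f z)) z :=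
    (Complex.conjCLE.toContinuousLinearMap.hasFDerivAt (x := f z)).comp z hf.hasFDerivAt
  have h2 : wdb (fun w => (starRingEnd ℂ) (f w)) z =
      (1/2 : ℂ) • ((starRingEnd ℂ) (fderiv ℝ f z 1) +
        Complex.I • (starRingEnd ℂ) (fderiv ℝ f z Complex.I)) := by
    rw [wdb, h.fderiv]; simp
  rw [h2, wd]
  simp only [smul_eq_mul, map_mul, map_sub, map_add, Complex.conj_I, map_div₀, map_one,
    map_ofNat]
  ring

lemma wd_comp {g : ℂ → ℂ} {g' : ℂ} {f : ℂ → ℂ} {z : ℂ}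
    (hg : HasDerivAt g g' (f z)) (hf : DifferentiableAt ℝ f z) :
    wd (fun w => g (f w)) z = g' * wd f z := by
  have h : HasFDerivAt (fun w => g (f w))
      (((ContinuousLinearMap.smulRight (1 : ℂ →L[ℂ] ℂ) g').restrictScalars ℝ).comp (fderiv ℝ f z)) z :=
    (hg.hasFDerivAt.restrictScalars ℝ).comp z hf.hasFDerivAt
  rw [wd, wd, h.fderiv]
  simp only [ContinuousLinearMap.coe_comp', Function.comp_apply,
    ContinuousLinearMap.coe_restrictScalars', ContinuousLinearMap.smulRight_apply,
    ContinuousLinearMap.one_apply, smul_eq_mul]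
  ring

lemma wdb_comp {g : ℂ → ℂ} {g' : ℂ} {f : ℂ → ℂ} {z : ℂ}
    (hg : HasDerivAt g g' (f z)) (hf : DifferentiableAt ℝ f z) :
    wdb (fun w => g (f w)) z = g' * wdb f z := by
  have h : HasFDerivAt (fun w => g (f w))
      (((ContinuousLinearMap.smulRight (1 : ℂ →L[ℂ] ℂ) g').restrictScalars ℝ).comp (fderiv ℝ f z)) z :=
    (hg.hasFDerivAt.restrictScalars ℝ).comp z hf.hasFDerivAt
  rw [wdb, wdb, h.fderiv]
  simp only [ContinuousLinearMap.coe_comp', Function.comp_apply,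
    ContinuousLinearMap.coe_restrictScalars', ContinuousLinearMap.smulRight_apply,
    ContinuousLinearMap.one_apply, smul_eq_mul]
  ring

lemma wdb_mul {f g : ℂ → ℂ} {z : ℂ} (hf : DifferentiableAt ℝ f z)
    (hg : DifferentiableAt ℝ g z) :
    wdb (fun w => f w * g w) z = wdb f z * g z + f z * wdb g z := by
  have h : HasFDerivAt (fun w => f w * g w) _ z := hf.hasFDerivAt.mul hg.hasFDerivAt
  rw [wdb, h.fderiv, wdb, wdb]
  simp only [ContinuousLinearMap.add_apply, ContinuousLinearMap.coe_smul', Pi.smul_apply,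
    smul_eq_mul]
  ring

end helpers

/-- If `F_n` is nowhere zero and `∂F_n = ∂(log‖F_n‖²)·F_n` (i.e. `F_{n+1} = 0` in the
recursion), then `ξ = conj(F_n)/‖F_n‖²` is holomorphic: `∂̄ξ = 0`. -/
theorem xi_holomorphic (N : ℕ) (U : Set ℂ) (hU : IsOpen U)
    (Fn : ℂ → Fin N → ℂ) (hsm : ContDiffOn ℝ (⊤ : ℕ∞) Fn U)
    (hnz : ∀ z ∈ U, Fn z ≠ 0)
    (hrec : ∀ z ∈ U, wd Fn z =
      (wd (fun w => Complex.log (symProd (Fn w) (conjV (Fn w)))) z) • Fn z) :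
    ∀ z ∈ U,
      wdb (fun w => (symProd (Fn w) (conjV (Fn w)))⁻¹ • conjV (Fn w)) z = 0 := by
  intro z hz
  set q : ℂ → ℂ := fun w => symProd (Fn w) (conjV (Fn w)) with hqdef
  -- differentiability
  have hFn : DifferentiableAt ℝ Fn z :=
    (hsm.contDiffAt (hU.mem_nhds hz)).differentiableAt (by simp)
  have hFnj : ∀ j, DifferentiableAt ℝ (fun w => Fn w j) z := fun j =>
    (differentiableAt_pi.mp hFn) j
  have hconjFnj : ∀ j, DifferentiableAt ℝ (fun w => (starRingEnd ℂ) (Fn w j)) z := by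
    intro j
    exact (hFnj j).star
  have hqdiff : DifferentiableAt ℝ q z := by
    simp only [hqdef, symProd, conjV]
    exact DifferentiableAt.fun_sum fun j _ => (hFnj j).mul (hconjFnj j)
  -- q is real and positive
  have hqre : ∀ w, q w = ((∑ j, Complex.normSq (Fn w j) : ℝ) : ℂ) := by
    intro w
    simp [hqdef, symProd, conjV, Complex.mul_conj]
  have hconjq : ∀ w, (starRingEnd ℂ) (q w) = q w := by
    intro w; rw [hqre]; exact Complex.conj_ofReal _
  have hqpos : 0 < ∑ j, Complex.normSq (Fn z j) := by
    obtain ⟨j, hj⟩ := Function.ne_iff.mp (hnz z hz)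
    exact Finset.sum_pos' (fun i _ => Complex.normSq_nonneg _)
      ⟨j, Finset.mem_univ j, Complex.normSq_pos.mpr hj⟩
  have hq0 : q z ≠ 0 := by
    rw [hqre]; exact_mod_cast hqpos.ne'
  have hqinv : DifferentiableAt ℝ (fun w => (q w)⁻¹) z := hqdiff.inv hq0
  have hconjF : DifferentiableAt ℝ (fun w => conjV (Fn w)) z := by
    rw [differentiableAt_pi]
    exact fun j => hconjFnj j
  have hG : DifferentiableAt ℝ (fun w => (q w)⁻¹ • conjV (Fn w)) z := hqinv.smul hconjF
  -- wdb q = conj (wd q)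
  have hwdbq : wdb q z = (starRingEnd ℂ) (wd q z) := by
    have h := wdb_conj (f := q) (z := z) hqdiff
    rwa [show (fun w => (starRingEnd ℂ) (q w)) = q from funext hconjq] at h
  -- wd (log ∘ q)
  have hslit : q z ∈ Complex.slitPlane := by
    rw [hqre]; exact Complex.ofReal_mem_slitPlane.mpr hqpos
  have hlog : wd (fun w => Complex.log (q w)) z = (q z)⁻¹ * wd q z :=
    wd_comp (Complex.hasDerivAt_log hslit) hqdiff
  have hrecz := hrec z hz
  -- componentwise
  funext j
  have hGj : wdb (fun w => (q w)⁻¹ • conjV (Fn w)) z j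
      = wdb (fun w => (q w)⁻¹ * (starRingEnd ℂ) (Fn w j)) z := by
    have := wdb_clm (ContinuousLinearMap.proj (R := ℂ) (φ := fun _ : Fin N => ℂ) j) hG
    simp only [ContinuousLinearMap.proj_apply] at this
    rw [← this]
    rfl
  have hwdbinv : wdb (fun w => (q w)⁻¹) z = -((q z) ^ 2)⁻¹ * wdb q z :=
    wdb_comp (hasDerivAt_inv hq0) hqdiff
  have hwdbconjj : wdb (fun w => (starRingEnd ℂ) (Fn w j)) z
      = (starRingEnd ℂ) (wd (fun w => Fn w j) z) := wdb_conj (hFnj j)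
  have hwdFnj : wd (fun w => Fn w j) z = ((q z)⁻¹ * wd q z) * Fn z j := by
    have := wd_clm (ContinuousLinearMap.proj (R := ℂ) (φ := fun _ : Fin N => ℂ) j) hFn
    simp only [ContinuousLinearMap.proj_apply] at this
    have h2 : wd (fun w => Fn w j) z = wd Fn z j := this
    rw [h2, hrecz, Pi.smul_apply, smul_eq_mul, hlog]
  rw [hGj, wdb_mul hqinv (hconjFnj j), hwdbinv, hwdbconjj, hwdFnj]
  simp only [map_mul, map_inv₀, hconjq, ← hwdbq, Pi.zero_apply]
  field_simp
  ring
end
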